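/- arXiv:1701.01828 — 4 statements merged into one kernel-verified Lean document; each statement's English description precedes it below -/
import Mathlib

section
/- With the setup of the generalized GHZ states Ψ_{η,i_1,…,i_n} = Σ_j η_j φ_{j⊕i_1} ⊗ ⋯ ⊗ φ_{j⊕i_n}: if there exist indices s ≠ t with s, t ≠ l such that i_s ⊖ i'_s ≠ i_t ⊖ i'_t (subtraction mod d), then ⟨L̃_k Ψ_{η,i_1,…,i_n}, L̃_{k'} Ψ_{η,i'_1,…,i'_n}⟩ = 0 for all k, k', where L̃_k = I⊗⋯⊗L_k⊗⋯⊗I with L_k in the l-th slot. -/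
open Complex Matrix BigOperators

/-- Hermitian inner product, conjugate-linear in the first argument. -/
noncomputable def inn {ι : Type*} [Fintype ι] (x y : ι → ℂ) : ℂ :=
  ∑ i, starRingEnd ℂ (x i) * y i

/-- The generalized GHZ state Ψ_{η,i_1,…,i_n} = Σ_j η_j φ_{j⊕i_1} ⊗ ⋯ ⊗ φ_{j⊕i_n},
in coordinates on H^{⊗n}. -/
noncomputable def genGHZ {d n : ℕ} [NeZero d] (η : ZMod d → ℂ)
    (φ : ZMod d → (ZMod d → ℂ)) (i : Fin n → ZMod d) :
    (Fin n → ZMod d) → ℂ :=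
  fun f => ∑ j, η j * ∏ u, φ (j + i u) (f u)

/-- L̃ = I ⊗ ⋯ ⊗ L ⊗ ⋯ ⊗ I (L in the l-th slot) acting on a vector of H^{⊗n}. -/
noncomputable def Ltil {d n : ℕ} [NeZero d] (l : Fin n)
    (M : Matrix (ZMod d) (ZMod d) ℂ) (x : (Fin n → ZMod d) → ℂ) :
    (Fin n → ZMod d) → ℂ :=
  fun f => ∑ m, M (f l) m * x (Function.update f l m)

theorem genGHZ_Ltil_orthogonal (d n : ℕ) [NeZero d] (hn : 3 ≤ n) (l : Fin n)
    (φ : ZMod d → (ZMod d → ℂ))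
    (hφ : ∀ j j', inn (φ j) (φ j') = if j = j' then 1 else 0)
    (η : ZMod d → ℂ)
    (Lk Lk' : Matrix (ZMod d) (ZMod d) ℂ)
    (i i' : Fin n → ZMod d)
    (hst : ∃ s t : Fin n, s ≠ t ∧ s ≠ l ∧ t ≠ l ∧ i s - i' s ≠ i t - i' t) :
    inn (Ltil l Lk (genGHZ η φ i)) (Ltil l Lk' (genGHZ η φ i')) = 0 := by
  classical
  obtain ⟨s, t, hstne, hsl, htl, hkey⟩ := hst
  set A : ZMod d → Fin n → ZMod d → ℂ := fun j u v =>
    if u = l then ∑ m, Lk v m * φ (j + i l) m else φ (j + i u) v with hA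
  set A' : ZMod d → Fin n → ZMod d → ℂ := fun j u v =>
    if u = l then ∑ m, Lk' v m * φ (j + i' l) m else φ (j + i' u) v with hA'
  have key : ∀ (L : Matrix (ZMod d) (ZMod d) ℂ) (ii : Fin n → ZMod d)
      (B : ZMod d → Fin n → ZMod d → ℂ),
      (B = fun j u v => if u = l then ∑ m, L v m * φ (j + ii l) m else φ (j + ii u) v) →
      ∀ f : Fin n → ZMod d,
      Ltil l L (genGHZ η φ ii) f = ∑ j, η j * ∏ u, B j u (f u) := by
    intro L ii B hB f
    unfold Ltil genGHZ
    simp only [Finset.mul_sum]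
    rw [Finset.sum_comm]
    apply Finset.sum_congr rfl
    intro j _
    have hprod : ∀ m : ZMod d, ∏ u, φ (j + ii u) (Function.update f l m u)
        = φ (j + ii l) m * ∏ u ∈ Finset.univ.erase l, φ (j + ii u) (f u) := by
      intro m
      rw [← Finset.mul_prod_erase Finset.univ _ (Finset.mem_univ l)]
      simp only [Function.update_self]
      congr 1
      refine Finset.prod_congr rfl fun u hu => ?_
      rw [Function.update_of_ne (Finset.ne_of_mem_erase hu)]
    have hrhs : ∏ u, B j u (f u)
        = (∑ m, L (f l) m * φ (j + ii l) m) * ∏ u ∈ Finset.univ.erase l, φ (j + ii u) (f u) := by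
      rw [← Finset.mul_prod_erase Finset.univ _ (Finset.mem_univ l), hB]
      simp only [if_pos rfl]
      congr 1
      refine Finset.prod_congr rfl fun u hu => ?_
      rw [if_neg (Finset.ne_of_mem_erase hu)]
    simp only [hprod, hrhs, Finset.mul_sum, Finset.sum_mul]
    apply Finset.sum_congr rfl
    intro m _
    ring
  have key1 := key Lk i A hA
  have key2 := key Lk' i' A' hA'
  unfold inn
  simp only [key1, key2]
  -- now expand conjugate of sum, products
  have step : ∀ f : Fin n → ZMod d,
      starRingEnd ℂ (∑ j, η j * ∏ u, A j u (f u)) * (∑ j, η j * ∏ u, A' j u (f u))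
      = ∑ j, ∑ j', (starRingEnd ℂ (η j) * η j') *
          ∏ u, (starRingEnd ℂ (A j u (f u)) * A' j' u (f u)) := by
    intro f
    rw [map_sum, Finset.sum_mul_sum]
    apply Finset.sum_congr rfl; intro j _
    apply Finset.sum_congr rfl; intro j' _
    rw [_root_.map_mul, map_prod, Finset.prod_mul_distrib]
    ring
  simp only [step]
  rw [Finset.sum_comm]
  apply Finset.sum_eq_zero
  intro j _
  rw [Finset.sum_comm]
  apply Finset.sum_eq_zero
  intro j' _
  rw [← Finset.mul_sum]
  have factor : (∑ f : Fin n → ZMod d, ∏ u, (starRingEnd ℂ (A j u (f u)) * A' j' u (f u)))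
      = ∏ u, ∑ v, (starRingEnd ℂ (A j u v) * A' j' u v) := by
    rw [Fintype.prod_sum]
  rw [factor]
  -- choose the bad coordinate w
  obtain ⟨w, hwl, hw⟩ : ∃ w : Fin n, w ≠ l ∧ j + i w ≠ j' + i' w := by
    by_cases h : j + i s = j' + i' s
    · refine ⟨t, htl, fun ht => hkey ?_⟩
      have : i s - i' s = j' - j := by linear_combination h
      have h2 : i t - i' t = j' - j := by linear_combination ht
      rw [this, h2]
    · exact ⟨s, hsl, h⟩
  have hzero : (∑ v, starRingEnd ℂ (A j w v) * A' j' w v) = 0 := by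
    have : ∀ v, A j w v = φ (j + i w) v := by intro v; rw [hA]; simp [hwl]
    have h2 : ∀ v, A' j' w v = φ (j' + i' w) v := by intro v; rw [hA']; simp [hwl]
    simp only [this, h2]
    have := hφ (j + i w) (j' + i' w)
    unfold inn at this
    rw [this, if_neg hw]
  rw [Finset.prod_eq_zero (Finset.mem_univ w) hzero, mul_zero]
end

section
/- The two-dimensional subspace of ℂ⁴ ⊗ ℂ² spanned by Ψ_1 = (1/√2)(ξ_0⊗|0⟩ + ξ_1⊗|1⟩) and Ψ_2 = (1/√2)(ξ_2⊗|0⟩ + ξ_3⊗|1⟩), where {ξ_0,ξ_1,ξ_2,ξ_3} is an orthonormal basis of ℂ⁴, satisfies: the eight vectors (I⊗L_k)Ψ_l for k ∈ {1,2,3,4}, l ∈ {1,2} are pairwise orthogonal, each of squared norm 1/4, where L_k are the explicit Kraus operators. -/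
open Complex Matrix BigOperators

noncomputable def L : Fin 4 → Matrix (Fin 2) (Fin 2) ℂ :=
  ![ (1/4 : ℂ) • !![2, 1 - I; 1 + I, 0],
     (1/4 : ℂ) • !![2, -1 + I; -1 - I, 0],
     (1/4 : ℂ) • !![0, 1 + I; 1 - I, 2],
     (1/4 : ℂ) • !![0, -1 - I; -1 + I, 2] ]

/-- (I ⊗ M) acting on a vector of ℂ⁴ ⊗ ℂ², in coordinates. -/
noncomputable def IL (M : Matrix (Fin 2) (Fin 2) ℂ) (x : Fin 4 × Fin 2 → ℂ) :
    Fin 4 × Fin 2 → ℂ :=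
  fun p => ∑ j, M p.2 j * x (p.1, j)

/-- Ψ_l = (1/√2)(ξ_{2(l-1)} ⊗ |0⟩ + ξ_{2l-1} ⊗ |1⟩) in coordinates,
for a family ξ indexed by Fin 4 and l ∈ Fin 2 (zero-based). -/
noncomputable def PsiL (ξ : Fin 4 → (Fin 4 → ℂ)) (l : Fin 2) :
    Fin 4 × Fin 2 → ℂ :=
  fun p => (Real.sqrt 2 : ℂ)⁻¹ *
    ξ (⟨2 * l.val + p.2.val, by have h1 := l.isLt; have h2 := p.2.isLt; omega⟩) p.1


/-! Since `IL` is a ∗-representation of 2 × 2 matrices (`IL Aᴴ` is the adjoint of `IL A`, and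
`IL A ∘ IL B = IL (A * B)`), the inner product is `⟪Ψ_l, (I ⊗ L_kᴴ L_k') Ψ_l'⟫`. For an
orthonormal family `ξ` the vectors `Ψ_l` are orthonormal maximally entangled states, so
`⟪Ψ_l, (I ⊗ M) Ψ_l'⟫ = δ_{ll'} tr M / 2`; and the Kraus operators are orthogonal for the
Hilbert–Schmidt inner product, each of squared norm `1/2`. -/

lemma inn_IL_left (A : Matrix (Fin 2) (Fin 2) ℂ) (x y : Fin 4 × Fin 2 → ℂ) :
    inn (IL A x) y = inn x (IL Aᴴ y) := by
  simp only [inn, IL, Fintype.sum_prod_type, map_sum, map_mul, conjTranspose_apply,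
    RCLike.star_def, Finset.sum_mul, Finset.mul_sum]
  refine Finset.sum_congr rfl fun i _ => ?_
  rw [Finset.sum_comm]
  exact Finset.sum_congr rfl fun j _ => Finset.sum_congr rfl fun m _ => by ring

lemma IL_IL (A B : Matrix (Fin 2) (Fin 2) ℂ) (x : Fin 4 × Fin 2 → ℂ) :
    IL A (IL B x) = IL (A * B) x := by
  ext p
  simp only [IL, mul_apply, Finset.mul_sum, Finset.sum_mul, mul_assoc]
  exact Finset.sum_comm

lemma conj_inv_sqrt_two_mul_inv_sqrt_two :
    starRingEnd ℂ ((Real.sqrt 2 : ℂ)⁻¹) * (Real.sqrt 2 : ℂ)⁻¹ = 2⁻¹ := by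
  rw [map_inv₀, conj_ofReal, ← mul_inv, ← ofReal_mul, Real.mul_self_sqrt zero_le_two]
  norm_num

lemma inn_PsiL_IL_PsiL_eq_sum (ξ : Fin 4 → (Fin 4 → ℂ)) (M : Matrix (Fin 2) (Fin 2) ℂ)
    (l l' : Fin 2) :
    inn (PsiL ξ l) (IL M (PsiL ξ l')) = 2⁻¹ * ∑ m : Fin 2, ∑ j : Fin 2,
      M m j * inn (ξ ⟨2 * l + m, by omega⟩) (ξ ⟨2 * l' + j, by omega⟩) := by
  simp only [inn, IL, PsiL, Fintype.sum_prod_type, Finset.mul_sum]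
  rw [Finset.sum_comm]
  refine Finset.sum_congr rfl fun m _ => ?_
  rw [Finset.sum_comm]
  refine Finset.sum_congr rfl fun j _ => Finset.sum_congr rfl fun i _ => ?_
  rw [map_mul, ← conj_inv_sqrt_two_mul_inv_sqrt_two]
  ring

lemma inn_PsiL_IL_PsiL (ξ : Fin 4 → (Fin 4 → ℂ))
    (hξ : ∀ a b, inn (ξ a) (ξ b) = if a = b then 1 else 0)
    (M : Matrix (Fin 2) (Fin 2) ℂ) (l l' : Fin 2) :
    inn (PsiL ξ l) (IL M (PsiL ξ l')) = if l = l' then 2⁻¹ * M.trace else 0 := by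
  rw [inn_PsiL_IL_PsiL_eq_sum]
  fin_cases l <;> fin_cases l' <;> simp [hξ, Fin.sum_univ_two, trace_fin_two]

lemma trace_conjTranspose_L_mul_L (k k' : Fin 4) :
    ((L k)ᴴ * L k').trace = if k = k' then 1 / 2 else 0 := by
  fin_cases k <;> fin_cases k' <;>
    norm_num [L, trace_fin_two, mul_apply, Fin.sum_univ_two, Complex.ext_iff]

theorem code_vectors_orthogonal
    (ξ : Fin 4 → (Fin 4 → ℂ))
    (hξ : ∀ a b, inn (ξ a) (ξ b) = if a = b then 1 else 0)
    (k k' : Fin 4) (l l' : Fin 2) :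
    inn (IL (L k) (PsiL ξ l)) (IL (L k') (PsiL ξ l'))
      = if k = k' ∧ l = l' then (1/4 : ℂ) else 0 := by
  rw [inn_IL_left, IL_IL, inn_PsiL_IL_PsiL ξ hξ, trace_conjTranspose_L_mul_L]
  by_cases hk : k = k' <;> by_cases hl : l = l' <;> norm_num [hk, hl]
end

section
/- There are exactly 2^{n-2} GHZ states Ψ_{i_1,…,i_n} (up to the identification (i_1,…,i_n) ∼ (ī_1,…,ī_n)) among the 2^{n-1} distinct GHZ states such that any two chosen states differ in at least two coordinates among {1,…,n}∖{l}; equivalently, the set {(i_1,…,i_n) : i_l = 0, i_s chosen so that pairwise the tuples restricted to coordinates ≠ l differ in ≥ 2 positions or are complementary} has cardinality 2^{n-2}. -/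
open BigOperators

theorem ghz_code_count (n : ℕ) (hn : 3 ≤ n) (l : Fin n) :
    ∃ S : Finset (Fin n → Fin 2),
      (∀ i ∈ S, i l = 0) ∧
      (∀ i ∈ S, ∀ i' ∈ S, i ≠ i' →
        2 ≤ (Finset.univ.filter (fun u : Fin n => u ≠ l ∧ i u ≠ i' u)).card) ∧
      S.card = 2 ^ (n - 2) ∧
      ∀ S' : Finset (Fin n → Fin 2),
        (∀ i ∈ S', i l = 0) →
        (∀ i ∈ S', ∀ i' ∈ S', i ≠ i' →
          2 ≤ (Finset.univ.filter (fun u : Fin n => u ≠ l ∧ i u ≠ i' u)).card) →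
        S'.card ≤ 2 ^ (n - 2) := by
  classical
  have hnt : Nontrivial (Fin n) := Fin.nontrivial_iff_two_le.mpr (by omega)
  obtain ⟨u0, hu0 : u0 ≠ l⟩ := exists_ne l
  have addself : ∀ a : Fin 2, a + a = 0 := by decide
  set R : Finset (Fin n) := Finset.univ.filter (fun v => v ≠ l ∧ v ≠ u0) with hR
  have hmemR : ∀ v, v ∈ R ↔ (v ≠ l ∧ v ≠ u0) := by
    intro v; simp [hR]
  have hlR : l ∉ R := by simp [hmemR]
  have hu0R : u0 ∉ R := by simp [hmemR]
  have hlins : l ∉ insert u0 R := by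
    simp [hlR, Ne.symm hu0]
  have huniv : (insert l (insert u0 R)) = Finset.univ := by
    ext v
    simp only [Finset.mem_insert, hmemR, Finset.mem_univ, iff_true]
    by_cases h1 : v = l
    · exact Or.inl h1
    · by_cases h2 : v = u0
      · exact Or.inr (Or.inl h2)
      · exact Or.inr (Or.inr ⟨h1, h2⟩)
  have hRcard : R.card = n - 2 := by
    have h1 : (insert l (insert u0 R)).card = R.card + 2 := by
      rw [Finset.card_insert_of_notMem hlins, Finset.card_insert_of_notMem hu0R]
    rw [huniv, Finset.card_univ, Fintype.card_fin] at h1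
    omega
  -- the reference set T of functions vanishing at l and u0
  set T : Finset (Fin n → Fin 2) :=
    Finset.univ.filter (fun j => j l = 0 ∧ j u0 = 0) with hTdef
  have hmemT : ∀ j, j ∈ T ↔ (j l = 0 ∧ j u0 = 0) := by
    intro j; simp [hTdef]
  have hTcard : T.card = 2 ^ (n - 2) := by
    have hb : T.card = (Finset.univ : Finset ({v // v ∈ R} → Fin 2)).card := by
      refine Finset.card_bij' (fun j _ => fun v => j v.1)
        (fun f _ => fun v => if h : v ∈ R then f ⟨v, h⟩ else 0) ?_ ?_ ?_ ?_
      · intro j hj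
        exact Finset.mem_univ _
      · intro f hf
        rw [hmemT]
        constructor
        · simp [hlR]
        · simp [hu0R]
      · intro j hj
        funext v
        by_cases h : v ∈ R
        · simp [h]
        · have hv : v = l ∨ v = u0 := by
            by_contra hc
            push_neg at hc
            exact h ((hmemR v).mpr hc)
          rw [hmemT] at hj
          rcases hv with rfl | rfl
          · simp [h, hj.1]
          · simp [h, hj.2]
      · intro f hf
        funext v
        simp [v.2]
    rw [hb, Finset.card_univ, Fintype.card_fun, Fintype.card_fin, Fintype.card_coe, hRcard]
  -- the encoding map
  set g : (Fin n → Fin 2) → (Fin n → Fin 2) :=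
    fun j => fun u => if u = l then 0 else if u = u0 then (∑ v ∈ R, j v) else j u
    with hg
  have hgl : ∀ j, g j l = 0 := by intro j; simp [hg]
  have hsumR : ∀ j, ∑ v ∈ R, g j v = ∑ v ∈ R, j v := by
    intro j
    apply Finset.sum_congr rfl
    intro v hv
    rw [hmemR] at hv
    simp [hg, hv.1, hv.2]
  have hparity : ∀ j, ∑ v, g j v = 0 := by
    intro j
    rw [← huniv, Finset.sum_insert hlins, Finset.sum_insert hu0R, hsumR]
    have h1 : g j l = 0 := hgl j
    have h2 : g j u0 = ∑ v ∈ R, j v := by simp [hg, hu0]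
    rw [h1, h2, zero_add, addself]
  have hginj : ∀ j ∈ T, ∀ j' ∈ T, g j = g j' → j = j' := by
    intro j hj j' hj' h
    rw [hmemT] at hj hj'
    funext u
    by_cases h1 : u = l
    · subst h1; rw [hj.1, hj'.1]
    · by_cases h2 : u = u0
      · subst h2; rw [hj.2, hj'.2]
      · have := congrFun h u
        simpa [hg, h1, h2] using this
  refine ⟨T.image g, ?_, ?_, ?_, ?_⟩
  · -- i l = 0
    intro i hi
    obtain ⟨j, _, rfl⟩ := Finset.mem_image.mp hi
    exact hgl j
  · -- minimum distance 2
    intro i hi i' hi' hne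
    obtain ⟨j, hj, rfl⟩ := Finset.mem_image.mp hi
    obtain ⟨j', hj', rfl⟩ := Finset.mem_image.mp hi'
    by_contra hcard
    push_neg at hcard
    have hle1 : (Finset.univ.filter (fun u : Fin n => u ≠ l ∧ g j u ≠ g j' u)).card ≤ 1 := by
      omega
    obtain ⟨u, hu⟩ := Function.ne_iff.mp hne
    have hunel : u ≠ l := by
      intro h; subst h; exact hu (by rw [hgl, hgl])
    have huD : u ∈ Finset.univ.filter (fun u : Fin n => u ≠ l ∧ g j u ≠ g j' u) := by
      simp [hunel, hu]
    have hagree : ∀ v, v ≠ u → g j v = g j' v := by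
      intro v hv
      by_contra hc
      have hvl : v ≠ l := by
        intro h; subst h; exact hc (by rw [hgl, hgl])
      have hvD : v ∈ Finset.univ.filter (fun u : Fin n => u ≠ l ∧ g j u ≠ g j' u) := by
        simp [hvl, hc]
      exact hv (Finset.card_le_one.mp hle1 v hvD u huD)
    have hsum : ∑ v, (g j v - g j' v) = g j u - g j' u := by
      apply Finset.sum_eq_single u
      · intro b _ hb
        rw [hagree b hb, sub_self]
      · intro h
        exact absurd (Finset.mem_univ u) h
    rw [Finset.sum_sub_distrib, hparity, hparity, sub_zero] at hsum
    exact sub_ne_zero_of_ne hu hsum.symm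
  · -- cardinality
    rw [Finset.card_image_of_injOn (fun j hj j' hj' h => hginj j hj j' hj' h), hTcard]
  · -- maximality
    intro S' hS'l hS'd
    have hsub : S'.image (fun i => Function.update i u0 0) ⊆ T := by
      intro k hk
      obtain ⟨i, hi, rfl⟩ := Finset.mem_image.mp hk
      rw [hmemT]
      constructor
      · rw [Function.update_of_ne (Ne.symm hu0)]
        exact hS'l i hi
      · exact Function.update_self _ _ _
    have hinj : ∀ i ∈ S', ∀ i' ∈ S',
        Function.update i u0 0 = Function.update i' u0 0 → i = i' := by
      intro i hi i' hi' h
      by_contra hne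
      have h2 := hS'd i hi i' hi' hne
      have hsub1 : (Finset.univ.filter (fun u : Fin n => u ≠ l ∧ i u ≠ i' u)) ⊆ {u0} := by
        intro u hu
        simp only [Finset.mem_filter, Finset.mem_univ, true_and] at hu
        simp only [Finset.mem_singleton]
        by_contra hc
        have := congrFun h u
        rw [Function.update_of_ne hc, Function.update_of_ne hc] at this
        exact hu.2 this
      have := Finset.card_le_card hsub1
      rw [Finset.card_singleton] at this
      omega
    have := Finset.card_le_card hsub
    rwa [Finset.card_image_of_injOn (fun i hi i' hi' h => hinj i hi i' hi' h), hTcard] at this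
end

section
/- Let P be an orthogonal projection on a finite-dimensional Hilbert space H, and (E_k)_{k=1}^m operators with P E_k† E_{k'} P = λ_k δ_{kk'} P, λ_k > 0 for all k. Define R_k = P E_k† / √λ_k. Then for any vector ψ in the range of P, Σ_k R_k E_k |ψ⟩⟨ψ| E_k† R_k† = (Σ_k λ_k) |ψ⟩⟨ψ|, i.e., the recovery map R(σ) = Σ_k R_k σ R_k† satisfies R(ε(|ψ⟩⟨ψ|)) ∝ |ψ⟩⟨ψ| where ε(ρ) = Σ_k E_k ρ E_k†. -/
/-!
Since `ψ = Pψ`, the Knill–Laflamme condition gives `R_k E_{k'} ψ = δ_{kk'} √λ_k ψ`. Conjugating a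
rank-one operator by `A` gives `A |ψ⟩⟨ψ| A† = |Aψ⟩⟨Aψ|`, so each term `R_k E_{k'} |ψ⟩⟨ψ| E_{k'}† R_k†`
is `δ_{kk'} λ_k |ψ⟩⟨ψ|`, and both sums collapse to `(Σ_k λ_k) |ψ⟩⟨ψ|`.
-/

open scoped InnerProductSpace BigOperators

/-- The rank-one operator |ψ⟩⟨ψ|. -/
noncomputable def outer {H : Type*} [NormedAddCommGroup H] [InnerProductSpace ℂ H]
    (ψ : H) : H →ₗ[ℂ] H :=
  ((innerSL ℂ ψ).toLinearMap).smulRight ψ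

section Outer

variable {H G : Type*} [NormedAddCommGroup H] [InnerProductSpace ℂ H]
  [NormedAddCommGroup G] [InnerProductSpace ℂ G]

@[simp]
theorem outer_apply (ψ x : H) : outer ψ x = ⟪ψ, x⟫_ℂ • ψ := rfl

@[simp]
theorem outer_zero : outer (0 : H) = 0 := by
  ext x
  simp

theorem outer_ofReal_smul (r : ℝ) (ψ : H) :
    outer ((r : ℂ) • ψ) = ((r ^ 2 : ℝ) : ℂ) • outer ψ := by
  ext x
  simp only [outer_apply, inner_smul_left, Complex.conj_ofReal, LinearMap.smul_apply, smul_smul]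
  push_cast
  ring_nf

theorem comp_outer_comp_adjoint [FiniteDimensional ℂ H] [FiniteDimensional ℂ G]
    (A : H →ₗ[ℂ] G) (ψ : H) : A ∘ₗ outer ψ ∘ₗ LinearMap.adjoint A = outer (A ψ) := by
  ext x
  simp [LinearMap.adjoint_inner_right]

end Outer

theorem recovery_map_restores_general
    {H : Type*} [NormedAddCommGroup H] [InnerProductSpace ℂ H]
    [FiniteDimensional ℂ H] {m : ℕ}
    (K : Submodule ℂ H)
    (P : H →ₗ[ℂ] H)
    (hP : P = ((K.subtypeL.comp (K.orthogonalProjection) : H →L[ℂ] H) : H →ₗ[ℂ] H))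
    (E : Fin m → (H →ₗ[ℂ] H)) (lam : Fin m → ℝ) (hlam : ∀ k, 0 < lam k)
    (hKL : ∀ k k', P ∘ₗ LinearMap.adjoint (E k) ∘ₗ E k' ∘ₗ P
      = if k = k' then (lam k : ℂ) • P else 0)
    (ψ : H) (hψ : ψ ∈ K)
    (R : Fin m → (H →ₗ[ℂ] H))
    (hR : ∀ k, R k = ((Real.sqrt (lam k) : ℂ))⁻¹ • (P ∘ₗ LinearMap.adjoint (E k))) :
    (∑ k, R k ∘ₗ E k ∘ₗ outer ψ ∘ₗ LinearMap.adjoint (E k) ∘ₗ LinearMap.adjoint (R k)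
        = ((∑ k, lam k : ℝ) : ℂ) • outer ψ) ∧
    (∑ k, ∑ k', R k ∘ₗ E k' ∘ₗ outer ψ ∘ₗ LinearMap.adjoint (E k') ∘ₗ LinearMap.adjoint (R k)
        = ((∑ k, lam k : ℝ) : ℂ) • outer ψ) := by
  have hPψ : P ψ = ψ := by
    simp [hP, Submodule.starProjection_eq_self_iff.mpr hψ]
  have hRE : ∀ k k', R k (E k' ψ) = if k = k' then (Real.sqrt (lam k) : ℂ) • ψ else 0 := by
    intro k k'
    have hKLψ := LinearMap.congr_fun (hKL k k') ψ
    simp only [LinearMap.comp_apply, hPψ] at hKLψ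
    rw [hR, LinearMap.smul_apply, LinearMap.comp_apply, hKLψ]
    split_ifs
    · rw [LinearMap.smul_apply, hPψ, smul_smul, ← Complex.ofReal_inv, ← Complex.ofReal_mul,
        inv_mul_eq_div, Real.div_sqrt]
    · simp
  have hterm : ∀ k k',
      R k ∘ₗ E k' ∘ₗ outer ψ ∘ₗ LinearMap.adjoint (E k') ∘ₗ LinearMap.adjoint (R k)
        = if k = k' then (lam k : ℂ) • outer ψ else 0 := by
    intro k k'
    have h := comp_outer_comp_adjoint (R k ∘ₗ E k') ψ
    simp only [LinearMap.adjoint_comp, LinearMap.comp_assoc, LinearMap.comp_apply] at h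
    rw [h, hRE]
    split_ifs
    · rw [outer_ofReal_smul, Real.sq_sqrt (hlam k).le]
    · exact outer_zero
  constructor
  · simp only [hterm, if_true, ← Finset.sum_smul, Complex.ofReal_sum]
  · simp only [hterm, Finset.sum_ite_eq, Finset.mem_univ, if_true, ← Finset.sum_smul,
      Complex.ofReal_sum]

theorem recovery_map_restores
    {H : Type*} [NormedAddCommGroup H] [InnerProductSpace ℂ H]
    [FiniteDimensional ℂ H] {m : ℕ}
    (K : Submodule ℂ H)
    (P : H →ₗ[ℂ] H)
    (hP : P = ((K.subtypeL.comp (K.orthogonalProjection) : H →L[ℂ] H) : H →ₗ[ℂ] H))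
    (E : Fin m → (H →ₗ[ℂ] H)) (lam : Fin m → ℝ) (hlam : ∀ k, 0 < lam k)
    (hKL : ∀ k k', P ∘ₗ LinearMap.adjoint (E k) ∘ₗ E k' ∘ₗ P
      = if k = k' then (lam k : ℂ) • P else 0)
    (ψ : H) (hψ : ψ ∈ K) (hψn : ‖ψ‖ = 1)
    (R : Fin m → (H →ₗ[ℂ] H))
    (hR : ∀ k, R k = ((Real.sqrt (lam k) : ℂ))⁻¹ • (P ∘ₗ LinearMap.adjoint (E k))) :
    (∑ k, R k ∘ₗ E k ∘ₗ outer ψ ∘ₗ LinearMap.adjoint (E k) ∘ₗ LinearMap.adjoint (R k)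
        = ((∑ k, lam k : ℝ) : ℂ) • outer ψ) ∧
    (∑ k, ∑ k', R k ∘ₗ E k' ∘ₗ outer ψ ∘ₗ LinearMap.adjoint (E k') ∘ₗ LinearMap.adjoint (R k)
        = ((∑ k, lam k : ℝ) : ℂ) • outer ψ) :=
  recovery_map_restores_general K P hP E lam hlam hKL ψ hψ R hR
end
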